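/- Combining both cases: under the hypotheses of the estimator reduction theorem (A1)-(A2), parameters 0<θ_A≤1, κ>0, 0<ρ_B<1/Λ₅, γ and λ chosen with 0<γ<ρ₂^{-2}−1 and 0<λ<min{(1−(1+γ)ρ₂²)θ_A/(1−θ_A), κ(1−ρ_B)}, and 0<κ<κ₀:=(1−ρ_A)/(Λ₅−1), the output of SAFEM satisfies σ_{ℓ+1}² ≤ ρ₁₂ σ_ℓ² + Λ₁₁ δ_{ℓ,ℓ+1}² for all ℓ, where ρ₁₂ := max{ρ_A+κΛ₅, 1+λ+κρ_B}/(1+κ) < 1 and Λ₁₁ := (1+1/λ)Λ₂² + (1+1/γ)Λ₃². -/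

import Mathlib

/-! Write `σ² = η² + μ²`. In either case `σ_{ℓ+1}² - Λ₁₁ δ² ≤ a η² + b μ²`, with `(a, b) = (ρ_A, Λ₅)`
in case (A) and `(1 + λ, ρ_B)` in case (B). Since `(1 + κ)(a x + b y) - (a + κ b)(x + y) = (b - a)(y - κ x)`,
the case distinction `μ² ≤ κ η²` versus `κ η² < μ²` is exactly what makes `a η² + b μ² ≤ (a + κ b)/(1 + κ) σ²`:
in case (A) `ρ_A < 1 ≤ Λ₅`, in case (B) `ρ_B < 1 < 1 + λ`. The contraction `ρ₁₂ < 1` is the choice of `κ < κ₀`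
for the first entry of the maximum and of `λ < κ (1 - ρ_B)` for the second. -/

section CaseWeights

variable {a b κ x y : ℝ}

theorem mul_add_mul_le_div_mul_add (hκ : 0 < 1 + κ) (hcross : (b - a) * (y - κ * x) ≤ 0) :
    a * x + b * y ≤ (a + κ * b) / (1 + κ) * (x + y) := by
  rw [div_mul_eq_mul_div, le_div_iff₀ hκ]
  linarith

theorem add_le_div_mul_add_of_cross {x' y' C c : ℝ} (hκ : 0 < 1 + κ)
    (hcross : (b - a) * (y - κ * x) ≤ 0) (hxy : 0 ≤ x + y) (hc : a + κ * b ≤ c)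
    (hx' : x' ≤ a * x + C) (hy' : y' ≤ b * y) :
    x' + y' ≤ c / (1 + κ) * (x + y) + C := by
  have hweights : a * x + b * y ≤ (a + κ * b) / (1 + κ) * (x + y) :=
    mul_add_mul_le_div_mul_add hκ hcross
  have hmono : (a + κ * b) / (1 + κ) * (x + y) ≤ c / (1 + κ) * (x + y) := by gcongr
  linarith

end CaseWeights

theorem stmt_8_general (ρ₂ θA κ ρB γ lam Λ₂ Λ₃ Λ₅ : ℝ) (η μ δ : ℕ → ℝ)
    (hκ : 0 < κ)
    (hlam : 0 < lam)
    (hlam' : lam < min ((1 - (1 + γ) * ρ₂ ^ 2) * θA / (1 - θA)) (κ * (1 - ρB)))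
    (hΛ₅ : 1 ≤ Λ₅)
    (hκ₀ : κ * (Λ₅ - 1) < 1 - ((1 + lam) * (1 - θA) + (1 + γ) * ρ₂ ^ 2 * θA))
    (hcases : ∀ ℓ : ℕ,
      (μ ℓ ^ 2 ≤ κ * η ℓ ^ 2 ∧
        η (ℓ + 1) ^ 2 ≤ ((1 + lam) * (1 - θA) + (1 + γ) * ρ₂ ^ 2 * θA) * η ℓ ^ 2 +
          ((1 + 1 / lam) * Λ₂ ^ 2 + (1 + 1 / γ) * Λ₃ ^ 2) * δ ℓ ^ 2 ∧
        μ (ℓ + 1) ^ 2 ≤ Λ₅ * μ ℓ ^ 2) ∨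
      (κ * η ℓ ^ 2 < μ ℓ ^ 2 ∧
        η (ℓ + 1) ^ 2 ≤ (1 + lam) * η ℓ ^ 2 +
          ((1 + 1 / lam) * Λ₂ ^ 2 + (1 + 1 / γ) * Λ₃ ^ 2) * δ ℓ ^ 2 ∧
        μ (ℓ + 1) ^ 2 ≤ ρB * μ ℓ ^ 2)) :
    (max (((1 + lam) * (1 - θA) + (1 + γ) * ρ₂ ^ 2 * θA) + κ * Λ₅)
        (1 + lam + κ * ρB) / (1 + κ) < 1) ∧
    ∀ ℓ : ℕ, η (ℓ + 1) ^ 2 + μ (ℓ + 1) ^ 2 ≤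
      max (((1 + lam) * (1 - θA) + (1 + γ) * ρ₂ ^ 2 * θA) + κ * Λ₅)
        (1 + lam + κ * ρB) / (1 + κ) * (η ℓ ^ 2 + μ ℓ ^ 2) +
      ((1 + 1 / lam) * Λ₂ ^ 2 + (1 + 1 / γ) * Λ₃ ^ 2) * δ ℓ ^ 2 := by
  set ρA := (1 + lam) * (1 - θA) + (1 + γ) * ρ₂ ^ 2 * θA
  have hκ1 : 0 < 1 + κ := by linarith
  have hlamB : lam < κ * (1 - ρB) := hlam'.trans_le (min_le_right _ _)
  have hρA : ρA < 1 := by linarith [mul_nonneg hκ.le (sub_nonneg.2 hΛ₅)]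
  have hρB : ρB < 1 := by nlinarith
  refine ⟨by rw [div_lt_one hκ1, max_lt_iff]; constructor <;> linarith, fun ℓ => ?_⟩
  have hσ : 0 ≤ η ℓ ^ 2 + μ ℓ ^ 2 := by positivity
  rcases hcases ℓ with ⟨hA, hη, hμ⟩ | ⟨hB, hη, hμ⟩
  · exact add_le_div_mul_add_of_cross hκ1
      (mul_nonpos_of_nonneg_of_nonpos (by linarith) (by linarith)) hσ (le_max_left _ _) hη hμ
  · exact add_le_div_mul_add_of_cross hκ1
      (mul_nonpos_of_nonpos_of_nonneg (by linarith) (by linarith)) hσ (le_max_right _ _) hη hμ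

theorem stmt_8 (ρ₂ θA κ ρB γ lam Λ₂ Λ₃ Λ₅ : ℝ) (η μ δ : ℕ → ℝ)
    (hρ₂ : 0 < ρ₂) (hρ₂' : ρ₂ < 1) (hθ : 0 < θA) (hθ' : θA ≤ 1)
    (hκ : 0 < κ) (hρB : 0 < ρB) (hρB' : ρB < 1 / Λ₅)
    (hγ : 0 < γ) (hγ' : γ < ρ₂ ^ (-2 : ℤ) - 1)
    (hlam : 0 < lam)
    (hlam' : lam < min ((1 - (1 + γ) * ρ₂ ^ 2) * θA / (1 - θA)) (κ * (1 - ρB)))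
    (hΛ₂ : 0 ≤ Λ₂) (hΛ₃ : 0 ≤ Λ₃) (hΛ₅ : 1 ≤ Λ₅)
    (hκ₀ : κ * (Λ₅ - 1) < 1 - ((1 + lam) * (1 - θA) + (1 + γ) * ρ₂ ^ 2 * θA))
    (hη : ∀ ℓ, 0 ≤ η ℓ) (hμ : ∀ ℓ, 0 ≤ μ ℓ) (hδ : ∀ ℓ, 0 ≤ δ ℓ)
    (hcases : ∀ ℓ : ℕ,
      (μ ℓ ^ 2 ≤ κ * η ℓ ^ 2 ∧
        η (ℓ + 1) ^ 2 ≤ ((1 + lam) * (1 - θA) + (1 + γ) * ρ₂ ^ 2 * θA) * η ℓ ^ 2 +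
          ((1 + 1 / lam) * Λ₂ ^ 2 + (1 + 1 / γ) * Λ₃ ^ 2) * δ ℓ ^ 2 ∧
        μ (ℓ + 1) ^ 2 ≤ Λ₅ * μ ℓ ^ 2) ∨
      (κ * η ℓ ^ 2 < μ ℓ ^ 2 ∧
        η (ℓ + 1) ^ 2 ≤ (1 + lam) * η ℓ ^ 2 +
          ((1 + 1 / lam) * Λ₂ ^ 2 + (1 + 1 / γ) * Λ₃ ^ 2) * δ ℓ ^ 2 ∧
        μ (ℓ + 1) ^ 2 ≤ ρB * μ ℓ ^ 2)) :
    (max (((1 + lam) * (1 - θA) + (1 + γ) * ρ₂ ^ 2 * θA) + κ * Λ₅)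
        (1 + lam + κ * ρB) / (1 + κ) < 1) ∧
    ∀ ℓ : ℕ, η (ℓ + 1) ^ 2 + μ (ℓ + 1) ^ 2 ≤
      max (((1 + lam) * (1 - θA) + (1 + γ) * ρ₂ ^ 2 * θA) + κ * Λ₅)
        (1 + lam + κ * ρB) / (1 + κ) * (η ℓ ^ 2 + μ ℓ ^ 2) +
      ((1 + 1 / lam) * Λ₂ ^ 2 + (1 + 1 / γ) * Λ₃ ^ 2) * δ ℓ ^ 2 :=
  stmt_8_general ρ₂ θA κ ρB γ lam Λ₂ Λ₃ Λ₅ η μ δ hκ hlam hlam' hΛ₅ hκ₀ hcases
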